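/- arXiv:1503.02224 — 2 statements merged into one kernel-verified Lean document; each statement's English description precedes it below -/
import Mathlib

section
/- Bootstrap step: suppose u : (0,∞) → (0,∞) satisfies u(2R) ≥ C ∫_{R/2}^R u(y)^p y^2 R^{α-1} dy for all large R, and u(x) ≥ A x^β for large x with A > 0. Then u(x) ≥ A' x^{pβ + α + 2} for large x, for some A' > 0. -/
/-!
On the window `[R/2, R]` every power `y ^ s` is at least `2 ^ (-|s|) * R ^ s`, so the lower bound
`u y ≥ A y ^ β` makes the integrand `u(y)^p y^2` at least a constant times `R ^ (pβ + 2)` there.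
Integrating over a window of length `R/2` and multiplying by `C R ^ (α - 1)` gives
`u(2R) ≳ R ^ (pβ + α + 2)`.
-/

open MeasureTheory Set Real

lemma two_rpow_neg_abs_mul_rpow_le {R y : ℝ} (s : ℝ) (hR : 0 < R) (hy : y ∈ Icc (R / 2) R) :
    2 ^ (-|s|) * R ^ s ≤ y ^ s := by
  obtain ⟨hy₁, hy₂⟩ := hy
  rcases le_or_gt 0 s with hs | hs
  · calc 2 ^ (-|s|) * R ^ s = (R / 2) ^ s := by
          rw [abs_of_nonneg hs, rpow_neg zero_le_two, div_rpow hR.le zero_le_two, inv_mul_eq_div]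
      _ ≤ y ^ s := rpow_le_rpow (by positivity) hy₁ hs
  · calc 2 ^ (-|s|) * R ^ s ≤ 1 * R ^ s := by
          gcongr
          exact rpow_le_one_of_one_le_of_nonpos one_le_two (neg_nonpos.mpr (abs_nonneg s))
      _ ≤ y ^ s := by
          rw [one_mul]
          exact rpow_le_rpow_of_nonpos (by linarith) hy₂ hs.le

lemma rpow_mul_rpow_le_rpow_of_mul_rpow_le {A β p y v : ℝ} (hA : 0 ≤ A) (hy : 0 ≤ y)
    (hp : 0 ≤ p) (h : A * y ^ β ≤ v) : A ^ p * y ^ (p * β) ≤ v ^ p := by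
  calc A ^ p * y ^ (p * β) = (A * y ^ β) ^ p := by
        rw [mul_rpow hA (rpow_nonneg hy β), mul_comm p β, rpow_mul hy]
    _ ≤ v ^ p := rpow_le_rpow (by positivity) h hp

lemma rpow_le_setIntegral_Icc_half {u : ℝ → ℝ} {p β A M R : ℝ} (hp : 0 ≤ p) (hA : 0 ≤ A)
    (hR : 0 < R) (hMR : M ≤ R / 2) (hlb : ∀ y ≥ M, u y ≥ A * y ^ β)
    (hint : IntegrableOn (fun y => u y ^ p * y ^ 2) (Icc (R / 2) R)) :
    A ^ p * 2 ^ (-|p * β|) / 8 * R ^ (p * β + 3) ≤ ∫ y in Icc (R / 2) R, u y ^ p * y ^ 2 := by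
  have hpoint : ∀ y ∈ Icc (R / 2) R,
      A ^ p * (2 ^ (-|p * β|) * R ^ (p * β)) * (R / 2) ^ 2 ≤ u y ^ p * y ^ 2 := by
    intro y hy
    have hy₀ : 0 ≤ y := by linarith [hy.1]
    have hupow : A ^ p * (2 ^ (-|p * β|) * R ^ (p * β)) ≤ u y ^ p :=
      calc A ^ p * (2 ^ (-|p * β|) * R ^ (p * β)) ≤ A ^ p * y ^ (p * β) := by
            gcongr
            exact two_rpow_neg_abs_mul_rpow_le _ hR hy
        _ ≤ u y ^ p := rpow_mul_rpow_le_rpow_of_mul_rpow_le hA hy₀ hp (hlb y (hMR.trans hy.1))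
    exact mul_le_mul hupow (pow_le_pow_left₀ (by positivity) hy.1 2) (by positivity)
      ((by positivity : (0 : ℝ) ≤ _).trans hupow)
  have hintegral := setIntegral_ge_of_const_le_real measurableSet_Icc
    (by simp [Real.volume_Icc]) hpoint hint
  rw [Real.volume_real_Icc_of_le (by linarith)] at hintegral
  calc A ^ p * 2 ^ (-|p * β|) / 8 * R ^ (p * β + 3)
      = A ^ p * (2 ^ (-|p * β|) * R ^ (p * β)) * (R / 2) ^ 2 * (R - R / 2) := by
        rw [rpow_add hR, show (3 : ℝ) = ((3 : ℕ) : ℝ) by norm_num, rpow_natCast]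
        ring
    _ ≤ _ := hintegral

lemma rpow_le_of_bootstrap {u : ℝ → ℝ} {α p β C A M R : ℝ} (hp : 0 ≤ p) (hC : 0 ≤ C)
    (hA : 0 ≤ A) (hR : 0 < R) (hMR : M ≤ R / 2)
    (hint : IntegrableOn (fun y => u y ^ p * y ^ 2) (Icc (R / 2) R))
    (hboot : u (2 * R) ≥ C * R ^ (α - 1) * ∫ y in Icc (R / 2) R, u y ^ p * y ^ 2)
    (hlb : ∀ y ≥ M, u y ≥ A * y ^ β) :
    C * A ^ p * 2 ^ (-|p * β|) / 8 * R ^ (p * β + α + 2) ≤ u (2 * R) := by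
  calc C * A ^ p * 2 ^ (-|p * β|) / 8 * R ^ (p * β + α + 2)
      = C * R ^ (α - 1) * (A ^ p * 2 ^ (-|p * β|) / 8 * R ^ (p * β + 3)) := by
        rw [show p * β + α + 2 = (α - 1) + (p * β + 3) by ring, rpow_add hR]
        ring
    _ ≤ C * R ^ (α - 1) * ∫ y in Icc (R / 2) R, u y ^ p * y ^ 2 := by
        gcongr
        exact rpow_le_setIntegral_Icc_half hp hA hR hMR hlb hint
    _ ≤ u (2 * R) := hboot

theorem stmt15_general (α p β C A M : ℝ) (hp : 1 < p)
    (hC : 0 < C) (hA : 0 < A)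
    (u : ℝ → ℝ)
    (hint : ∀ R > (0 : ℝ), IntegrableOn (fun y => u y ^ p * y ^ 2) (Set.Icc (R / 2) R))
    (hboot : ∀ R ≥ M, u (2 * R) ≥ C * R ^ (α - 1) * ∫ y in Set.Icc (R / 2) R, u y ^ p * y ^ 2)
    (hlb : ∀ y ≥ M, u y ≥ A * y ^ β) :
    ∃ A' > (0 : ℝ), ∃ M' : ℝ, ∀ x ≥ M', u x ≥ A' * x ^ (p * β + α + 2) := by
  set q := p * β + α + 2
  refine ⟨C * A ^ p * 2 ^ (-|p * β|) / 8 / 2 ^ q, by positivity, max (4 * M) 1, fun x hx => ?_⟩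
  have hx₀ : 0 < x := by linarith [le_max_right (4 * M) 1]
  have hMx : M ≤ x / 2 / 2 := by linarith [le_max_left (4 * M) 1]
  have hMR : M ≤ x / 2 := by linarith
  have hR : 0 < x / 2 := by positivity
  have hscale := rpow_le_of_bootstrap (by linarith) hC.le hA.le hR hMx (hint _ hR)
    (hboot _ hMR) hlb
  rw [mul_div_cancel₀ x two_ne_zero, div_rpow hx₀.le zero_le_two] at hscale
  calc C * A ^ p * 2 ^ (-|p * β|) / 8 / 2 ^ q * x ^ q
      = C * A ^ p * 2 ^ (-|p * β|) / 8 * (x ^ q / 2 ^ q) := by ring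
    _ ≤ u x := hscale

theorem stmt15 (α p β C A M : ℝ) (hα : 0 < α) (hα2 : α < 2) (hp : 1 < p)
    (hC : 0 < C) (hA : 0 < A)
    (u : ℝ → ℝ) (hupos : ∀ x > (0 : ℝ), 0 < u x)
    (hint : ∀ R > (0 : ℝ), IntegrableOn (fun y => u y ^ p * y ^ 2) (Set.Icc (R / 2) R))
    (hboot : ∀ R ≥ M, u (2 * R) ≥ C * R ^ (α - 1) * ∫ y in Set.Icc (R / 2) R, u y ^ p * y ^ 2)
    (hlb : ∀ y ≥ M, u y ≥ A * y ^ β) :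
    ∃ A' > (0 : ℝ), ∃ M' : ℝ, ∀ x ≥ M', u x ≥ A' * x ^ (p * β + α + 2) :=
  stmt15_general α p β C A M hp hC hA u hint hboot hlb
end

section
/- For p > 1, α ∈ (0,1), the derivative of τ(p) = (p^{m+2}(p - pα - 3) + 2p + α)/(1-p) + 2 with respect to p equals [p^{m+1}(m(p(α-1)+3)(p-1) + 6p - 3αp + 2αp² - 2p² - 6) + 2 + α]/(1-p)², and hence τ'(p) > 0 for all p ∈ (1, (n+α)/(n-α)) when m is sufficiently large. -/
/-!
The numerator `N` of `τ'` vanishes at `p = 1` and can be rewritten as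
`(p - 1) p^(m+1) ((m + 2)(3 - (1 - α) p) - (2 + α)) - (2 + α)(p^(m+1) - 1)`.
Bounding `p^(m+1) - 1 ≤ (m + 1)(p - 1) p^m` gives
`N ≥ (p - 1)² p^m ((2 + α)(m + 1) - (1 - α)(m + 2) p)`, and the last factor is positive as soon as
`p < (2 + α)/(2 - α)`, which holds on `(1, (n + α)/(n - α))` because `n ≥ 2`.
So `τ'` is in fact positive there for every `m`.
-/

theorem pow_succ_sub_one_le {p : ℝ} (hp : 1 ≤ p) (m : ℕ) :
    p ^ (m + 1) - 1 ≤ (p - 1) * (m + 1) * p ^ m := by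
  have h := abs_pow_sub_pow_le p 1 (m + 1)
  rwa [one_pow, abs_of_nonneg (sub_nonneg.mpr (one_le_pow₀ hp)), abs_of_nonneg (sub_nonneg.mpr hp),
    abs_of_nonneg (zero_le_one.trans hp), abs_one, max_eq_left hp, Nat.add_sub_cancel,
    Nat.cast_succ] at h

theorem add_div_sub_le_of_le {a b α : ℝ} (hα : 0 ≤ α) (ha : α < a) (hab : a ≤ b) :
    (b + α) / (b - α) ≤ (a + α) / (a - α) := by
  rw [div_le_div_iff₀ (by linarith) (by linarith)]
  nlinarith

namespace Tau

section

variable (α : ℝ) (m : ℕ)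

noncomputable def tau (q : ℝ) : ℝ := (q ^ (m + 2) * (q - q * α - 3) + 2 * q + α) / (1 - q) + 2

def derivNumerator (p : ℝ) : ℝ :=
  p ^ (m + 1) * ((m : ℝ) * ((p * (α - 1) + 3) * (p - 1)) + 6 * p - 3 * α * p
    + 2 * α * p ^ 2 - 2 * p ^ 2 - 6) + 2 + α

theorem hasDerivAt_tau {p : ℝ} (hp : p ≠ 1) :
    HasDerivAt (tau α m) (derivNumerator α m p / (1 - p) ^ 2) p := by
  have hpow : HasDerivAt (fun q : ℝ => q ^ (m + 2)) (((m : ℝ) + 2) * p ^ (m + 1)) p := by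
    simpa using hasDerivAt_pow (m + 2) p
  have hlin : HasDerivAt (fun q : ℝ => q - q * α - 3) (1 - α) p := by
    simpa using ((hasDerivAt_id p).sub ((hasDerivAt_id p).mul_const α)).sub_const 3
  have hnum := ((hpow.mul hlin).add ((hasDerivAt_id p).const_mul 2)).add_const α
  have hden : HasDerivAt (fun q : ℝ => 1 - q) (-1) p := by
    simpa using (hasDerivAt_id p).const_sub 1
  refine ((hnum.div hden (sub_ne_zero.mpr hp.symm)).add_const 2).congr_deriv ?_
  simp only [derivNumerator, Pi.mul_apply, Pi.add_apply, id]
  ring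

theorem derivNumerator_eq (p : ℝ) :
    derivNumerator α m p = (p - 1) * p ^ (m + 1) * ((m + 2) * (3 - (1 - α) * p) - (2 + α))
      - (2 + α) * (p ^ (m + 1) - 1) := by
  unfold derivNumerator
  ring

end

theorem sq_mul_le_derivNumerator {α : ℝ} (m : ℕ) {p : ℝ} (hα : -2 ≤ α) (hp : 1 ≤ p) :
    (p - 1) ^ 2 * p ^ m * ((2 + α) * (m + 1) - (1 - α) * (m + 2) * p) ≤ derivNumerator α m p := by
  have hgeom := mul_le_mul_of_nonneg_left (pow_succ_sub_one_le hp m) (by linarith : 0 ≤ 2 + α)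
  rw [derivNumerator_eq]
  linear_combination hgeom

theorem derivNumerator_pos {α : ℝ} (m : ℕ) {p : ℝ} (hα : α < 1) (hp : 1 < p) (hpα : p * (2 - α) < 2 + α) :
    0 < derivNumerator α m p := by
  have hα2 : -2 ≤ α := by nlinarith
  have hcoef : (1 - α) * (m + 2) * p < (2 + α) * (m + 1) := by
    have hm : (0 : ℝ) ≤ m := m.cast_nonneg
    nlinarith [mul_lt_mul_of_pos_left hpα (by nlinarith : (0 : ℝ) < (1 - α) * (m + 2))]
  refine lt_of_lt_of_le ?_ (sq_mul_le_derivNumerator m hα2 hp.le)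
  have : 0 < p - 1 := sub_pos.mpr hp
  have : 0 < p ^ m := pow_pos (by linarith) m
  have : 0 < (2 + α) * (m + 1) - (1 - α) * (m + 2) * p := sub_pos.mpr hcoef
  positivity

end Tau

theorem stmt16 (n : ℕ) (hn : 2 ≤ n) (α : ℝ) (hα : 0 < α) (hα1 : α < 1) :
    ∃ M : ℕ, ∀ m ≥ M, ∀ p ∈ Set.Ioo (1 : ℝ) (((n : ℝ) + α) / ((n : ℝ) - α)),
      HasDerivAt (fun q : ℝ => (q ^ (m + 2) * (q - q * α - 3) + 2 * q + α) / (1 - q) + 2)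
        ((p ^ (m + 1) * ((m : ℝ) * ((p * (α - 1) + 3) * (p - 1)) + 6 * p - 3 * α * p
            + 2 * α * p ^ 2 - 2 * p ^ 2 - 6) + 2 + α) / (1 - p) ^ 2) p ∧
      0 < (p ^ (m + 1) * ((m : ℝ) * ((p * (α - 1) + 3) * (p - 1)) + 6 * p - 3 * α * p
            + 2 * α * p ^ 2 - 2 * p ^ 2 - 6) + 2 + α) / (1 - p) ^ 2 := by
  refine ⟨0, fun m _ p ⟨hp1, hpn⟩ => ⟨Tau.hasDerivAt_tau α m hp1.ne', ?_⟩⟩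
  have hp2 : p * (2 - α) < 2 + α := by
    have h := hpn.trans_le (add_div_sub_le_of_le (a := 2) hα.le (by linarith) (by exact_mod_cast hn))
    rwa [lt_div_iff₀ (by linarith)] at h
  exact div_pos (Tau.derivNumerator_pos m hα1 hp1 hp2) (sq_pos_of_neg (sub_neg.mpr hp1))
end
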